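/- Let (X,d,μ) be a non-homogeneous metric measure space and α ∈ [0,1). There exists a constant P̃_α > 0, depending on C_λ, β₆ and α, with the following property: if x ∈ X is a fixed point, C_x > 0, and {f_B}_{B ∋ x} is a collection of real numbers indexed by the balls containing x such that |f_B − f_S| ≤ K̃^{(α)}_{B,S} C_x for all doubling balls B ⊂ S with x ∈ B satisfying K̃^{(α)}_{B,S} ≤ P̃_α, then there exists a constant C₄ > 0, depending only on C_λ, β₆ and α, such that |f_B − f_S| ≤ C₄ K̃^{(α)}_{B,S} C_x for all doubling balls B ⊂ S with x ∈ B. -/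

import Mathlib

/-!
Going down from a doubling ball `6^j B`, every non-doubling step divides `μ(6^k B)` by at least
`β₆` while `λ(c_B, 6^k r_B)` shrinks by at most `C_λ³ < β₆`; hence the terms of `K̃^{(α)}`
decay geometrically below a doubling ball, and those up to the next doubling ball sum to at most
a constant `c₀`.

For concentric doubling balls `6^a B ⊆ 6^b B` one climbs in steps, each of which collects
`K̃`-mass at least `1` and then stops at the next doubling ball. Every step is a pair with
`K̃ ≤ 3 + c₀ ≤ P̃`, and the number of steps is bounded by the total `K̃`-mass.

For general `B ⊆ S` with `N = N_{B,S}`, let `Q` be the first doubling ball `6^j B` with `j > N`.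
Then `S ⊆ Q`, the pair `(B, Q)` is concentric, and `K̃_{S,Q} ≤ P̃`, because each `6^k S` lies in
`6^{k+N+1} B`, whose term decays geometrically up to `Q`.
-/

open MeasureTheory Metric Set Filter ENNReal NNReal

noncomputable section

namespace NonHomog

/-- Geometric doubling with constant `N₀`: every ball can be covered by at most `N₀`
balls of half the radius. -/
def GeomDoublingWith (X : Type*) [MetricSpace X] (N₀ : ℕ) : Prop :=
  ∀ (x : X) (r : ℝ), ∃ s : Finset X,
    s.card ≤ N₀ ∧ Metric.ball x r ⊆ ⋃ y ∈ s, Metric.ball y (r / 2)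

/-- `(X, d)` is geometrically doubling. -/
def GeomDoubling (X : Type*) [MetricSpace X] : Prop :=
  ∃ N₀ : ℕ, GeomDoublingWith X N₀

/-- `μ` is upper doubling with dominating function `Λ` and constant `Cl`. -/
structure UpperDoubling {X : Type*} [MetricSpace X] [MeasurableSpace X]
    (μ : MeasureTheory.Measure X) (Λ : X → ℝ → ℝ) (Cl : ℝ) : Prop where
  one_le : 1 ≤ Cl
  pos : ∀ (x : X) (r : ℝ), 0 < r → 0 < Λ x r
  mono : ∀ x : X, MonotoneOn (Λ x) (Set.Ioi (0 : ℝ))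
  measure_ball_le : ∀ (x : X) (r : ℝ), 0 < r →
    μ (Metric.ball x r) ≤ ENNReal.ofReal (Λ x r)
  le_mul_half : ∀ (x : X) (r : ℝ), 0 < r → Λ x r ≤ Cl * Λ x (r / 2)
  compat : ∀ (x y : X) (r : ℝ), 0 < r → dist x y ≤ r → Λ x r ≤ Cl * Λ y r

/-- Conditions (1.7) and (1.8) for the kernel `K` with size constant `CK` and
regularity exponent `δ`. -/
structure IsFracKernel {X : Type*} [MetricSpace X] (Λ : X → ℝ → ℝ) (α : ℝ)
    (K : X → X → ℝ) (CK δ : ℝ) : Prop where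
  CK_pos : 0 < CK
  delta_pos : 0 < δ
  delta_le_one : δ ≤ 1
  size : ∀ x y : X, x ≠ y → |K x y| ≤ CK * Λ x (dist x y) ^ (α - 1)
  smooth : ∀ x x' y : X, 2 * dist x x' ≤ dist x y →
    |K x y - K x' y| + |K y x - K y x'| ≤
      CK * dist x x' ^ δ * dist x y ^ (-δ) * Λ x (dist x y) ^ (α - 1)

/-- `T` is a generalized fractional integral associated with the kernel `K`. -/
structure IsGenFracIntegral {X : Type*} [MetricSpace X] [MeasurableSpace X]
    (μ : MeasureTheory.Measure X) (K : X → X → ℝ) (T : (X → ℝ) → X → ℝ) : Prop where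
  map_add : ∀ f g : X → ℝ, T (f + g) = T f + T g
  map_smul : ∀ (c : ℝ) (f : X → ℝ), T (c • f) = c • T f
  eq_integral : ∀ f : X → ℝ, (∃ M : ℝ, ∀ x, |f x| ≤ M) →
    Bornology.IsBounded (Function.support f) →
    ∀ x : X, x ∉ Function.support f → T f x = ∫ y, K x y * f y ∂μ

/-- `T` is bounded from `L^p(μ)` to `L^q(μ)` with constant `C`. -/
def BddLpLqWith {X : Type*} [MeasurableSpace X] (μ : MeasureTheory.Measure X)
    (T : (X → ℝ) → X → ℝ) (p q C : ℝ) : Prop :=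
  ∀ f : X → ℝ, MeasureTheory.MemLp f (ENNReal.ofReal p) μ →
    MeasureTheory.eLpNorm (T f) (ENNReal.ofReal q) μ ≤
      ENNReal.ofReal C * MeasureTheory.eLpNorm f (ENNReal.ofReal p) μ

/-- The coefficient `K_{B,S}` for balls `B = B(xB,rB) ⊆ S = B(xS,rS)`. -/
def Kcoef {X : Type*} [MetricSpace X] [MeasurableSpace X] (μ : MeasureTheory.Measure X)
    (Λ : X → ℝ → ℝ) (xB : X) (rB : ℝ) (xS : X) (rS : ℝ) : ℝ :=
  1 + ∫ z in Metric.ball xS (2 * rS) \ Metric.ball xB rB, (Λ xB (dist z xB))⁻¹ ∂μ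

/-- The function `f` satisfies the `RBMO(μ)` conditions with constant `C`. -/
def RBMOBoundWith {X : Type*} [MetricSpace X] [MeasurableSpace X]
    (μ : MeasureTheory.Measure X) (Λ : X → ℝ → ℝ) (f : X → ℝ) (C : ℝ) : Prop :=
  ∃ fB : X → ℝ → ℝ,
    (∀ (x : X) (r : ℝ), 0 < r →
      ∫ y in Metric.ball x r, |f y - fB x r| ∂μ ≤ C * (μ (Metric.ball x (2 * r))).toReal) ∧
    (∀ (x : X) (r : ℝ) (x' : X) (r' : ℝ), 0 < r → 0 < r' →
      Metric.ball x r ⊆ Metric.ball x' r' →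
      |fB x r - fB x' r'| ≤ C * Kcoef μ Λ x r x' r')

/-- `f ∈ RBMO(μ)`. -/
def MemRBMO {X : Type*} [MetricSpace X] [MeasurableSpace X]
    (μ : MeasureTheory.Measure X) (Λ : X → ℝ → ℝ) (f : X → ℝ) : Prop :=
  ∃ C : ℝ, 0 ≤ C ∧ RBMOBoundWith μ Λ f C

/-- The `RBMO(μ)` norm of `f`. -/
def RBMONorm {X : Type*} [MetricSpace X] [MeasurableSpace X]
    (μ : MeasureTheory.Measure X) (Λ : X → ℝ → ℝ) (f : X → ℝ) : ℝ :=
  sInf {C : ℝ | 0 ≤ C ∧ RBMOBoundWith μ Λ f C}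

/-- `b` is an `(∞,1)_λ`-atomic block with `|b|_{H¹} = c`. -/
def IsAtomicBlock {X : Type*} [MetricSpace X] [MeasurableSpace X]
    (μ : MeasureTheory.Measure X) (Λ : X → ℝ → ℝ) (b : X → ℝ) (c : ℝ) : Prop :=
  ∃ (xR : X) (rR : ℝ) (l₁ l₂ : ℝ) (a₁ a₂ : X → ℝ) (x₁ x₂ : X) (r₁ r₂ : ℝ),
    0 < rR ∧ 0 < r₁ ∧ 0 < r₂ ∧
    Function.support b ⊆ Metric.ball xR rR ∧
    MeasureTheory.Integrable b μ ∧ (∫ x, b x ∂μ) = 0 ∧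
    (∀ x, b x = l₁ * a₁ x + l₂ * a₂ x) ∧
    Function.support a₁ ⊆ Metric.ball x₁ r₁ ∧
    Function.support a₂ ⊆ Metric.ball x₂ r₂ ∧
    Metric.ball x₁ r₁ ⊆ Metric.ball xR rR ∧
    Metric.ball x₂ r₂ ⊆ Metric.ball xR rR ∧
    (∀ x, |a₁ x| ≤ ((μ (Metric.ball x₁ (4 * r₁))).toReal * Kcoef μ Λ x₁ r₁ xR rR)⁻¹) ∧
    (∀ x, |a₂ x| ≤ ((μ (Metric.ball x₂ (4 * r₂))).toReal * Kcoef μ Λ x₂ r₂ xR rR)⁻¹) ∧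
    c = |l₁| + |l₂|

/-- The set of sums `Σᵢ |bᵢ|_{H¹}` over atomic block decompositions of `f`. -/
def H1NormSet {X : Type*} [MetricSpace X] [MeasurableSpace X]
    (μ : MeasureTheory.Measure X) (Λ : X → ℝ → ℝ) (f : X → ℝ) : Set ℝ :=
  {c : ℝ | ∃ (b : ℕ → X → ℝ) (l : ℕ → ℝ),
    (∀ i, IsAtomicBlock μ Λ (b i) (l i)) ∧ Summable l ∧
    Filter.Tendsto
      (fun N => MeasureTheory.eLpNorm (f - ∑ i ∈ Finset.range N, b i) 1 μ)
      Filter.atTop (nhds 0) ∧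
    c = ∑' i, l i}

/-- `f ∈ H¹(μ)`. -/
def MemH1 {X : Type*} [MetricSpace X] [MeasurableSpace X]
    (μ : MeasureTheory.Measure X) (Λ : X → ℝ → ℝ) (f : X → ℝ) : Prop :=
  MeasureTheory.Integrable f μ ∧ (H1NormSet μ Λ f).Nonempty

/-- The `H¹(μ)` norm of `f`. -/
def H1Norm {X : Type*} [MetricSpace X] [MeasurableSpace X]
    (μ : MeasureTheory.Measure X) (Λ : X → ℝ → ℝ) (f : X → ℝ) : ℝ :=
  sInf (H1NormSet μ Λ f)

/-- The fractional maximal operator `M^{(α)}_{p,ρ}`. -/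
def fracMax {X : Type*} [MetricSpace X] [MeasurableSpace X]
    (μ : MeasureTheory.Measure X) (p ρ α : ℝ) (f : X → ℝ) (x : X) : ℝ≥0∞ :=
  ⨆ (c : X) (r : ℝ) (_ : 0 < r) (_ : x ∈ Metric.ball c r),
    ENNReal.ofReal (((μ (Metric.ball c (ρ * r))).toReal ^ (α * p - 1) *
      ∫ y in Metric.ball c r, |f y| ^ p ∂μ) ^ (1 / p))

/-- The constant `β₆`. -/
def beta6 (N₀ : ℕ) (Cl : ℝ) : ℝ :=
  6 ^ (3 * max (Real.logb 2 N₀) (Real.logb 2 Cl)) +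
    30 ^ (Real.logb 2 N₀) + 30 ^ (Real.logb 2 Cl)

/-- The ball `B(x,r)` is `(6,β)`-doubling. -/
def IsDoublingBall {X : Type*} [MetricSpace X] [MeasurableSpace X]
    (μ : MeasureTheory.Measure X) (β : ℝ) (x : X) (r : ℝ) : Prop :=
  μ (Metric.ball x (6 * r)) ≤ ENNReal.ofReal β * μ (Metric.ball x r)

/-- Index of the smallest doubling ball of the form `6^j B`. -/
def doublingIndex {X : Type*} [MetricSpace X] [MeasurableSpace X]
    (μ : MeasureTheory.Measure X) (β : ℝ) (x : X) (r : ℝ) : ℕ :=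
  sInf {j : ℕ | IsDoublingBall μ β x (6 ^ j * r)}

/-- Mean value of `f` over the ball `B(x,r)`. -/
def ballAvg {X : Type*} [MetricSpace X] [MeasurableSpace X]
    (μ : MeasureTheory.Measure X) (x : X) (r : ℝ) (f : X → ℝ) : ℝ :=
  (μ (Metric.ball x r)).toReal⁻¹ * ∫ y in Metric.ball x r, f y ∂μ

/-- Mean value of `f` over `B̃`, the smallest doubling ball of the form `6^j B`. -/
def tildeAvg {X : Type*} [MetricSpace X] [MeasurableSpace X]
    (μ : MeasureTheory.Measure X) (β : ℝ) (x : X) (r : ℝ) (f : X → ℝ) : ℝ :=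
  ballAvg μ x (6 ^ doublingIndex μ β x r * r) f

/-- `N_{B,S}`: smallest integer `N ≥ 1` with `6^N r_B ≥ r_S`. -/
def NBS (rB rS : ℝ) : ℕ :=
  sInf {N : ℕ | 1 ≤ N ∧ rS ≤ 6 ^ N * rB}

/-- The fractional coefficient `K̃^{(α)}_{B,S}` where `B = B(x,rB)` and `r_S = rS`. -/
def Ktilde {X : Type*} [MetricSpace X] [MeasurableSpace X]
    (μ : MeasureTheory.Measure X) (Λ : X → ℝ → ℝ) (α : ℝ) (x : X) (rB rS : ℝ) : ℝ :=
  1 + ∑ k ∈ Finset.Icc 1 (NBS rB rS),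
    ((μ (Metric.ball x (6 ^ k * rB))).toReal / Λ x (6 ^ k * rB)) ^ (1 - α)

/-- The sharp maximal operator `M̃^{#,α}`. -/
def sharpMax {X : Type*} [MetricSpace X] [MeasurableSpace X]
    (μ : MeasureTheory.Measure X) (Λ : X → ℝ → ℝ) (β α : ℝ) (f : X → ℝ) (x : X) : ℝ≥0∞ :=
  (⨆ (c : X) (r : ℝ) (_ : 0 < r) (_ : x ∈ Metric.ball c r),
    ENNReal.ofReal ((μ (Metric.ball c (6 * r))).toReal⁻¹ *
      ∫ y in Metric.ball c r, |f y - tildeAvg μ β c r f| ∂μ)) +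
  ⨆ (cQ : X) (rQ : ℝ) (cR : X) (rR : ℝ) (_ : 0 < rQ) (_ : 0 < rR)
    (_ : x ∈ Metric.ball cQ rQ) (_ : Metric.ball cQ rQ ⊆ Metric.ball cR rR)
    (_ : IsDoublingBall μ β cQ rQ) (_ : IsDoublingBall μ β cR rR),
    ENNReal.ofReal (|ballAvg μ cQ rQ f - ballAvg μ cR rR f| / Ktilde μ Λ α cQ rQ rR)

/-- The commutator `[b, T]`. -/
def commOp {X : Type*} (b : X → ℝ) (T : (X → ℝ) → X → ℝ) : (X → ℝ) → X → ℝ :=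
  fun f x => b x * T f x - T (fun y => b y * f y) x

/-- The multilinear commutator `[b_k, ⋯, [b₁, T] ⋯ ]`. -/
def multiComm {X : Type*} : (k : ℕ) → (Fin k → X → ℝ) → ((X → ℝ) → X → ℝ) →
    (X → ℝ) → X → ℝ
  | 0, _, T => T
  | (k + 1), b, T => commOp (b (Fin.last k)) (multiComm k (fun i => b i.castSucc) T)

/-- `Φ` is a convex Orlicz function. -/
structure IsOrliczFn (Φ : ℝ → ℝ) : Prop where
  convex : ConvexOn ℝ (Set.Ici 0) Φ
  mono : MonotoneOn Φ (Set.Ici (0 : ℝ))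
  map_zero : Φ 0 = 0
  pos : ∀ t : ℝ, 0 < t → 0 < Φ t
  tendsto_atTop : Filter.Tendsto Φ Filter.atTop Filter.atTop

/-- The generalized inverse `Φ⁻¹(t) = inf {s > 0 : Φ(s) > t}`. -/
def orliczInv (Φ : ℝ → ℝ) (t : ℝ) : ℝ :=
  sInf {s : ℝ | 0 < s ∧ t < Φ s}

/-- The Luxemburg norm on the Orlicz space `L^Φ(μ)`. -/
def luxNorm {X : Type*} [MeasurableSpace X] (μ : MeasureTheory.Measure X)
    (Φ : ℝ → ℝ) (f : X → ℝ) : ℝ :=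
  sInf {t : ℝ | 0 < t ∧ ∫ x, Φ (|f x| / t) ∂μ ≤ 1}

/-- `f ∈ L^Φ(μ)`. -/
def MemOrlicz {X : Type*} [MeasurableSpace X] (μ : MeasureTheory.Measure X)
    (Φ : ℝ → ℝ) (f : X → ℝ) : Prop :=
  MeasureTheory.AEStronglyMeasurable f μ ∧
    MeasureTheory.Integrable (fun x => Φ |f x|) μ

/-- `f` satisfies the `Osc_{exp L^r}(μ)` conditions with constant `C`
(doubling parameter `β`). -/
def OscBoundWith {X : Type*} [MetricSpace X] [MeasurableSpace X]
    (μ : MeasureTheory.Measure X) (Λ : X → ℝ → ℝ) (β r : ℝ) (f : X → ℝ) (C : ℝ) : Prop :=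
  (∀ (x : X) (s : ℝ), 0 < s → ∀ t : ℝ, C < t →
    (μ (Metric.ball x (2 * s))).toReal⁻¹ *
      ∫ y in Metric.ball x s, Real.exp ((|f y - tildeAvg μ β x s f| / t) ^ r) ∂μ ≤ 2) ∧
  (∀ (cQ : X) (rQ : ℝ) (cR : X) (rR : ℝ), 0 < rQ → 0 < rR →
    Metric.ball cQ rQ ⊆ Metric.ball cR rR →
    IsDoublingBall μ β cQ rQ → IsDoublingBall μ β cR rR →
    |ballAvg μ cQ rQ f - ballAvg μ cR rR f| ≤ C * Kcoef μ Λ cQ rQ cR rR)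

/-- `f ∈ Osc_{exp L^r}(μ)`. -/
def MemOsc {X : Type*} [MetricSpace X] [MeasurableSpace X]
    (μ : MeasureTheory.Measure X) (Λ : X → ℝ → ℝ) (β r : ℝ) (f : X → ℝ) : Prop :=
  ∃ C : ℝ, 0 ≤ C ∧ OscBoundWith μ Λ β r f C

/-- The `Osc_{exp L^r}(μ)` norm of `f`. -/
def OscNorm {X : Type*} [MetricSpace X] [MeasurableSpace X]
    (μ : MeasureTheory.Measure X) (Λ : X → ℝ → ℝ) (β r : ℝ) (f : X → ℝ) : ℝ :=
  sInf {C : ℝ | 0 ≤ C ∧ OscBoundWith μ Λ β r f C}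

/-- `Φ_s(u) := u log^s (2 + u)`. -/
def PhiLog (s u : ℝ) : ℝ :=
  u * Real.log (2 + u) ^ s

/-- The dominating function `Λ` satisfies the `ε`-weak reverse doubling condition. -/
def WeakReverseDoubling (X : Type*) [MetricSpace X] (Λ : X → ℝ → ℝ) (ε : ℝ) : Prop :=
  ∃ C : ℝ → ℝ, (∀ a : ℝ, 1 ≤ C a) ∧
    (∀ r : ℝ, 0 < r → ENNReal.ofReal r < 2 * EMetric.diam (Set.univ : Set X) →
      ∀ a : ℝ, 1 < a →
        ENNReal.ofReal a < 2 * EMetric.diam (Set.univ : Set X) / ENNReal.ofReal r →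
        ∀ x : X, C a * Λ x r ≤ Λ x (a * r)) ∧
    (∀ a : ℝ, 1 < a → Summable fun k : ℕ => C (a ^ (k + 1)) ^ (-ε))

end NonHomog

namespace NonHomog

open Finset

theorem pow_three_lt_beta6 (N₀ : ℕ) (Cl : ℝ) : Cl ^ 3 < beta6 N₀ Cl := by
  have h30 : 0 < (30 : ℝ) ^ Real.logb 2 N₀ + 30 ^ Real.logb 2 Cl := by positivity
  suffices Cl ^ 3 ≤ 6 ^ (3 * max (Real.logb 2 N₀) (Real.logb 2 Cl)) by
    rw [beta6]; linarith
  rcases lt_or_ge Cl 1 with hCl | hCl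
  · have hN₀ : 0 ≤ Real.logb 2 N₀ :=
      div_nonneg (Real.log_natCast_nonneg N₀) (Real.log_nonneg one_le_two)
    calc Cl ^ 3 ≤ 1 := by
          nlinarith [mul_nonneg (sub_nonneg.2 hCl.le) (add_nonneg (sq_nonneg (Cl + 1 / 2))
            (by norm_num : (0 : ℝ) ≤ 3 / 4))]
      _ ≤ _ := Real.one_le_rpow (by norm_num) (by positivity)
  · have hν : 0 ≤ Real.logb 2 Cl := Real.logb_nonneg one_lt_two hCl
    calc Cl ^ 3 = (2 : ℝ) ^ (3 * Real.logb 2 Cl) := by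
          rw [mul_comm, Real.rpow_mul zero_le_two, Real.rpow_logb zero_lt_two (by norm_num)
            (by linarith)]
          norm_cast
      _ ≤ (6 : ℝ) ^ (3 * Real.logb 2 Cl) := by gcongr; norm_num
      _ ≤ _ := by
          gcongr
          · norm_num
          · exact le_max_right _ _

theorem NBS_spec {rB : ℝ} (hrB : 0 < rB) (rS : ℝ) : 1 ≤ NBS rB rS ∧ rS ≤ 6 ^ NBS rB rS * rB := by
  obtain ⟨n, hn⟩ := pow_unbounded_of_one_lt (rS / rB) (by norm_num : (1 : ℝ) < 6)
  refine Nat.sInf_mem (s := {N : ℕ | 1 ≤ N ∧ rS ≤ 6 ^ N * rB}) ⟨n + 1, by omega, ?_⟩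
  rw [div_lt_iff₀ hrB] at hn
  calc rS ≤ 6 ^ n * rB := hn.le
    _ ≤ 6 ^ (n + 1) * rB := by gcongr <;> norm_num

theorem NBS_le {rB rS : ℝ} {n : ℕ} (hn : 1 ≤ n) (h : rS ≤ 6 ^ n * rB) : NBS rB rS ≤ n :=
  Nat.sInf_le ⟨hn, h⟩

theorem pow_mul_lt_of_lt_NBS {rB rS : ℝ} {n : ℕ} (hn : 1 ≤ n) (h : n < NBS rB rS) :
    6 ^ n * rB < rS :=
  lt_of_not_ge fun h' => Nat.notMem_of_lt_sInf h ⟨hn, h'⟩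

theorem NBS_pow_mul_pow {r : ℝ} (hr : 0 < r) {a b : ℕ} (hab : a < b) :
    NBS (6 ^ a * r) (6 ^ b * r) = b - a := by
  have key : ∀ k : ℕ, (6 : ℝ) ^ b * r ≤ 6 ^ k * (6 ^ a * r) ↔ b ≤ k + a := fun k => by
    rw [← mul_assoc, ← pow_add, mul_le_mul_iff_left₀ hr,
      pow_le_pow_iff_right₀ (by norm_num : (1 : ℝ) < 6)]
  refine le_antisymm (NBS_le (by omega) ((key _).2 (by omega))) ?_
  exact le_csInf ⟨b - a, by omega, (key _).2 (by omega)⟩ fun k hk => by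
    have := (key k).1 hk.2; omega

theorem exists_mem_Ioc_one_le_sum_le_two {D : ℕ → ℝ} (hD : ∀ j, D j ≤ 1) {a : ℕ} :
    ∀ {b : ℕ}, 1 ≤ ∑ j ∈ Finset.Ioc a b, D j →
      ∃ m ∈ Finset.Ioc a b, 1 ≤ ∑ j ∈ Finset.Ioc a m, D j ∧ ∑ j ∈ Finset.Ioc a m, D j ≤ 2
  | 0, h => by
    rw [Finset.Ioc_eq_empty_of_le (Nat.zero_le a), sum_empty] at h
    linarith
  | b + 1, h => by
    by_cases hb : 1 ≤ ∑ j ∈ Finset.Ioc a b, D j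
    · obtain ⟨m, hm, hm'⟩ := exists_mem_Ioc_one_le_sum_le_two hD hb
      exact ⟨m, Finset.Ioc_subset_Ioc_right b.le_succ hm, hm'⟩
    · have hab : a ≤ b := by
        by_contra! hba
        rw [Finset.Ioc_eq_empty_of_le (by omega), sum_empty] at h
        linarith
      rw [sum_Ioc_succ_top hab] at h
      refine ⟨b + 1, Finset.mem_Ioc.2 ⟨by omega, le_rfl⟩, ?_, ?_⟩ <;>
        rw [sum_Ioc_succ_top hab] <;> linarith [hD (b + 1)]

theorem abs_sub_le_of_chain {D f : ℕ → ℝ} {good : ℕ → Prop} {P c₀ C : ℝ}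
    (hD₀ : ∀ j, 0 ≤ D j) (hD₁ : ∀ j, D j ≤ 1) (hP : 3 + c₀ ≤ P) (hC : 0 ≤ C)
    (hnext : ∀ m, ∃ e, m ≤ e ∧ good e ∧ ∑ j ∈ Finset.Ioc m e, D j ≤ c₀)
    (hloc : ∀ a b, a < b → good a → good b → 1 + ∑ j ∈ Finset.Ioc a b, D j ≤ P →
      |f a - f b| ≤ P * C)
    {a b : ℕ} (hab : a < b) (ha : good a) (hb : good b) :
    |f a - f b| ≤ P * (1 + ∑ j ∈ Finset.Ioc a b, D j) * C := by
  have hS : ∀ u v, 0 ≤ ∑ j ∈ Finset.Ioc u v, D j := fun u v => sum_nonneg fun j _ => hD₀ j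
  have hc₀ : 0 ≤ c₀ := by obtain ⟨e, -, -, he⟩ := hnext 0; linarith [hS 0 e]
  have hP₀ : 0 ≤ P := by linarith
  by_cases hdir : 1 + ∑ j ∈ Finset.Ioc a b, D j ≤ P
  · calc |f a - f b| ≤ P * C := hloc a b hab ha hb hdir
      _ ≤ P * (1 + ∑ j ∈ Finset.Ioc a b, D j) * C :=
          mul_le_mul_of_nonneg_right (le_mul_of_one_le_right hP₀ (by linarith [hS a b])) hC
  -- Walk from `a` until the `D`-mass reaches `1`, then on to the next good index `e`:
  -- the step `a → e` is local, and it pays for its constant with the mass it uses up.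
  obtain ⟨m, hm, hm₁, hm₂⟩ := exists_mem_Ioc_one_le_sum_le_two hD₁ (by linarith :
    1 ≤ ∑ j ∈ Finset.Ioc a b, D j)
  rw [Finset.mem_Ioc] at hm
  obtain ⟨e, hme, he, hSme⟩ := hnext m
  have hae : a < e := hm.1.trans_le hme
  have hSae : ∑ j ∈ Finset.Ioc a e, D j = ∑ j ∈ Finset.Ioc a m, D j + ∑ j ∈ Finset.Ioc m e, D j :=
    (sum_Ioc_consecutive _ hm.1.le hme).symm
  have heb : e < b := by
    by_contra! hbe
    have : ∑ j ∈ Finset.Ioc a b, D j ≤ ∑ j ∈ Finset.Ioc a e, D j :=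
      sum_le_sum_of_subset_of_nonneg (Finset.Ioc_subset_Ioc_right hbe) fun j _ _ => hD₀ j
    linarith
  have hSab : ∑ j ∈ Finset.Ioc a b, D j = ∑ j ∈ Finset.Ioc a e, D j + ∑ j ∈ Finset.Ioc e b, D j :=
    (sum_Ioc_consecutive _ hae.le heb.le).symm
  have hstep : |f a - f e| ≤ P * C := hloc a e hae ha he (by linarith)
  have hrest : |f e - f b| ≤ P * (1 + ∑ j ∈ Finset.Ioc e b, D j) * C :=
    abs_sub_le_of_chain hD₀ hD₁ hP hC hnext hloc heb he hb
  calc |f a - f b| ≤ |f a - f e| + |f e - f b| := abs_sub_le _ _ _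
    _ ≤ P * C + P * (1 + ∑ j ∈ Finset.Ioc e b, D j) * C := add_le_add hstep hrest
    _ = P * (2 + ∑ j ∈ Finset.Ioc e b, D j) * C := by ring
    _ ≤ P * (1 + ∑ j ∈ Finset.Ioc a b, D j) * C :=
        mul_le_mul_of_nonneg_right (mul_le_mul_of_nonneg_left (by linarith [hS m e]) hP₀) hC
termination_by b - a

theorem sum_Ioc_le_mul_inv_one_sub {T : ℕ → ℝ} {K q : ℝ} {t : ℕ} (hK : 0 ≤ K) (hq₀ : 0 ≤ q)
    (hq₁ : q < 1) (h : ∀ k ∈ Finset.Ioc 0 t, T k ≤ K * q ^ (t - k)) :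
    ∑ k ∈ Finset.Ioc 0 t, T k ≤ K * (1 - q)⁻¹ :=
  calc ∑ k ∈ Finset.Ioc 0 t, T k ≤ ∑ k ∈ Finset.Ioc 0 t, K * q ^ (t - k) := sum_le_sum h
    _ ≤ ∑ k ∈ Finset.range (t + 1), K * q ^ (t - k) :=
        sum_le_sum_of_subset_of_nonneg (fun k hk => by
          rw [Finset.mem_Ioc] at hk; rw [Finset.mem_range]; omega)
          fun _ _ _ => by positivity
    _ = K * ∑ k ∈ Finset.range (t + 1), q ^ k := by
        rw [← mul_sum, ← sum_range_reflect (fun k => q ^ k) (t + 1)]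
        simp
    _ ≤ K * (1 - q)⁻¹ := by
        have := geom_sum_Ico_le_of_lt_one (m := 0) (n := t + 1) hq₀ hq₁
        rw [← Finset.range_eq_Ico, pow_zero, one_div] at this
        gcongr

/-- `q = (C_λ³ / β)^{1-α}` is the rate at which the terms of `K̃^{(α)}` decay below a doubling
ball, so `(1 - q)⁻¹` bounds their sum there. -/
def tailConst (Cl β α : ℝ) : ℝ :=
  (1 - (Cl ^ 3 / β) ^ (1 - α))⁻¹

theorem ball_subset_ball_two_mul {X : Type*} [PseudoMetricSpace X] {x y : X} {r s : ℝ}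
    (hr : 0 < r) (h : ball x r ⊆ ball y s) : ball y s ⊆ ball x (2 * s) :=
  ball_subset_ball' (by linarith [dist_comm x y, mem_ball.1 (h (mem_ball_self hr))])

section NonHomogeneousSpace

variable {X : Type*} [MetricSpace X] [MeasurableSpace X] {μ : Measure X} {Λ : X → ℝ → ℝ}
  {Cl β α : ℝ}

theorem UpperDoubling.const_nonneg (hUD : UpperDoubling μ Λ Cl) : 0 ≤ Cl :=
  zero_le_one.trans hUD.one_le

theorem UpperDoubling.measure_ball_ne_top (hUD : UpperDoubling μ Λ Cl) (c : X) {r : ℝ}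
    (hr : 0 < r) : μ (ball c r) ≠ ⊤ :=
  ne_top_of_le_ne_top ofReal_ne_top (hUD.measure_ball_le c r hr)

theorem UpperDoubling.measure_ball_toReal_le (hUD : UpperDoubling μ Λ Cl) (c : X) {r : ℝ}
    (hr : 0 < r) : (μ (ball c r)).toReal ≤ Λ c r :=
  toReal_le_of_le_ofReal (hUD.pos c r hr).le (hUD.measure_ball_le c r hr)

theorem UpperDoubling.pos_of_pow_three_lt (hUD : UpperDoubling μ Λ Cl) (hβ : Cl ^ 3 < β) :
    0 < β :=
  (pow_pos (zero_lt_one.trans_le hUD.one_le) 3).trans hβ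

theorem UpperDoubling.apply_six_mul_le (hUD : UpperDoubling μ Λ Cl) (c : X) {s : ℝ} (hs : 0 < s) :
    Λ c (6 * s) ≤ Cl ^ 3 * Λ c s := by
  have := hUD.const_nonneg
  have halve : ∀ ρ, 0 < ρ → Λ c (2 * ρ) ≤ Cl * Λ c ρ := fun ρ hρ => by
    simpa using hUD.le_mul_half c (2 * ρ) (by positivity)
  calc Λ c (6 * s) ≤ Λ c (2 * (2 * (2 * s))) :=
        hUD.mono c (by positivity : (0 : ℝ) < 6 * s) (by positivity : (0 : ℝ) < 2 * (2 * (2 * s)))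
          (by linarith)
    _ ≤ Cl * Λ c (2 * (2 * s)) := halve _ (by positivity)
    _ ≤ Cl * (Cl * Λ c (2 * s)) := by gcongr; exact halve _ (by positivity)
    _ ≤ Cl * (Cl * (Cl * Λ c s)) := by gcongr; exact halve _ hs
    _ = Cl ^ 3 * Λ c s := by ring

theorem UpperDoubling.apply_pow_mul_le (hUD : UpperDoubling μ Λ Cl) (c : X) {s : ℝ} (hs : 0 < s)
    (k : ℕ) : Λ c (6 ^ k * s) ≤ (Cl ^ 3) ^ k * Λ c s := by
  induction k with
  | zero => simp
  | succ k ih =>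
    have := hUD.const_nonneg
    calc Λ c (6 ^ (k + 1) * s) = Λ c (6 * (6 ^ k * s)) := by ring_nf
      _ ≤ Cl ^ 3 * Λ c (6 ^ k * s) := hUD.apply_six_mul_le c (by positivity)
      _ ≤ Cl ^ 3 * ((Cl ^ 3) ^ k * Λ c s) := by gcongr
      _ = (Cl ^ 3) ^ (k + 1) * Λ c s := by ring

theorem UpperDoubling.mul_measure_ball_le_of_not_isDoublingBall (hUD : UpperDoubling μ Λ Cl)
    (hβ : 0 ≤ β) {c : X} {s : ℝ} (hs : 0 < s) (h : ¬ IsDoublingBall μ β c s) :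
    β * (μ (ball c s)).toReal ≤ (μ (ball c (6 * s))).toReal := by
  have := toReal_mono (hUD.measure_ball_ne_top c (by positivity)) (not_le.mp h).le
  rwa [toReal_mul, toReal_ofReal hβ] at this

theorem UpperDoubling.measure_ball_toReal_le_of_not_isDoublingBall
    (hUD : UpperDoubling μ Λ Cl) (hβ : 0 < β) {c : X} :
    ∀ (d : ℕ) {s : ℝ}, 0 < s → (∀ i < d, ¬ IsDoublingBall μ β c (6 ^ i * s)) →
      (μ (ball c s)).toReal ≤ (Cl ^ 3 / β) ^ d * Λ c s
  | 0, s, hs, _ => by simpa using hUD.measure_ball_toReal_le c hs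
  | d + 1, s, hs, h => by
    have hgrow := hUD.mul_measure_ball_le_of_not_isDoublingBall hβ.le hs
      (by simpa using h 0 (by omega))
    have ih := hUD.measure_ball_toReal_le_of_not_isDoublingBall hβ d (by positivity : 0 < 6 * s)
      fun i hi => by simpa [pow_succ, mul_assoc] using h (i + 1) (by omega)
    refine le_of_mul_le_mul_left ?_ hβ
    calc β * (μ (ball c s)).toReal ≤ (Cl ^ 3 / β) ^ d * Λ c (6 * s) := hgrow.trans ih
      _ ≤ (Cl ^ 3 / β) ^ d * (Cl ^ 3 * Λ c s) := by
          have := hUD.const_nonneg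
          gcongr
          exact hUD.apply_six_mul_le c hs
      _ = β * ((Cl ^ 3 / β) ^ (d + 1) * Λ c s) := by rw [pow_succ _ d]; field_simp

theorem UpperDoubling.exists_isDoublingBall (hUD : UpperDoubling μ Λ Cl) (hβ : Cl ^ 3 < β)
    (c : X) {r : ℝ} (hr : 0 < r) : ∃ j : ℕ, IsDoublingBall μ β c (6 ^ j * r) := by
  by_contra! h
  have := hUD.const_nonneg
  have hβ₀ := hUD.pos_of_pow_three_lt hβ
  have hpos : 0 < (μ (ball c (6 * r))).toReal := by
    refine toReal_pos (fun h0 => h 0 ?_) (hUD.measure_ball_ne_top c (by positivity))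
    simp [IsDoublingBall, h0]
  have hsmall : ∀ d : ℕ, (μ (ball c (6 * r))).toReal ≤ (Cl ^ 3 / β) ^ d * Λ c (6 * r) :=
    fun d => hUD.measure_ball_toReal_le_of_not_isDoublingBall hβ₀ d (by positivity)
      fun i _ => by simpa [pow_succ, mul_assoc] using h (i + 1)
  have hlim : Tendsto (fun d : ℕ => (Cl ^ 3 / β) ^ d * Λ c (6 * r)) atTop (nhds 0) := by
    simpa using (tendsto_pow_atTop_nhds_zero_of_lt_one (by positivity)
      ((div_lt_one hβ₀).mpr hβ)).mul_const (Λ c (6 * r))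
  exact hpos.not_ge (ge_of_tendsto' hlim hsmall)

theorem UpperDoubling.isDoublingBall_pow_add_doublingIndex (hUD : UpperDoubling μ Λ Cl)
    (hβ : Cl ^ 3 < β) (c : X) {r : ℝ} (hr : 0 < r) (m : ℕ) :
    IsDoublingBall μ β c (6 ^ (m + doublingIndex μ β c (6 ^ m * r)) * r) := by
  rw [add_comm m, pow_add, mul_assoc]
  exact Nat.sInf_mem (hUD.exists_isDoublingBall hβ c (by positivity))

theorem UpperDoubling.measure_div_le_of_le_doublingIndex (hUD : UpperDoubling μ Λ Cl)
    (hβ : Cl ^ 3 < β) (c : X) {r : ℝ} (hr : 0 < r) {k : ℕ} (hk : k ≤ doublingIndex μ β c r) :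
    (μ (ball c (6 ^ k * r))).toReal / Λ c (6 ^ k * r) ≤
      (Cl ^ 3 / β) ^ (doublingIndex μ β c r - k) := by
  rw [div_le_iff₀ (hUD.pos _ _ (by positivity))]
  refine hUD.measure_ball_toReal_le_of_not_isDoublingBall (hUD.pos_of_pow_three_lt hβ) _
    (by positivity) fun i hi => ?_
  rw [← mul_assoc, ← pow_add]
  exact Nat.notMem_of_lt_sInf (show i + k < doublingIndex μ β c r by omega)

theorem UpperDoubling.measure_div_le_mul_of_subset (hUD : UpperDoubling μ Λ Cl) {x y : X}
    {ρ ρ' K : ℝ} (hρ : 0 < ρ) (hρ' : 0 < ρ') (hsub : ball y ρ ⊆ ball x ρ')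
    (hΛ : Λ x ρ' ≤ K * Λ y ρ) :
    (μ (ball y ρ)).toReal / Λ y ρ ≤ K * ((μ (ball x ρ')).toReal / Λ x ρ') := by
  have hy := hUD.pos y ρ hρ
  have hx := hUD.pos x ρ' hρ'
  rw [div_le_iff₀ hy, mul_div_assoc', div_mul_eq_mul_div, le_div_iff₀ hx]
  calc (μ (ball y ρ)).toReal * Λ x ρ' ≤ (μ (ball x ρ')).toReal * (K * Λ y ρ) := by
        gcongr
        exact hUD.measure_ball_ne_top x hρ'
    _ = K * (μ (ball x ρ')).toReal * Λ y ρ := by ring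


def KtildeTerm (μ : Measure X) (Λ : X → ℝ → ℝ) (α : ℝ) (x : X) (r : ℝ) (k : ℕ) : ℝ :=
  ((μ (ball x (6 ^ k * r))).toReal / Λ x (6 ^ k * r)) ^ (1 - α)

theorem Ktilde_eq_sum (μ : Measure X) (Λ : X → ℝ → ℝ) (α : ℝ) (x : X) (rB rS : ℝ) :
    Ktilde μ Λ α x rB rS = 1 + ∑ k ∈ Finset.Ioc 0 (NBS rB rS), KtildeTerm μ Λ α x rB k := by
  rw [Ktilde, ← Finset.Icc_add_one_left_eq_Ioc, zero_add]
  rfl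

theorem sum_Ioc_KtildeTerm_pow_mul (μ : Measure X) (Λ : X → ℝ → ℝ) (α : ℝ) (x : X) (r : ℝ)
    (a n : ℕ) :
    ∑ k ∈ Finset.Ioc 0 n, KtildeTerm μ Λ α x (6 ^ a * r) k =
      ∑ j ∈ Finset.Ioc a (a + n), KtildeTerm μ Λ α x r j := by
  rw [show Finset.Ioc a (a + n) = Finset.Ioc (a + 0) (a + n) by rw [add_zero],
    ← map_add_left_Ioc, sum_map]
  refine sum_congr rfl fun k _ => ?_
  simp only [KtildeTerm, addLeftEmbedding_apply, pow_add, mul_assoc, mul_left_comm]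

theorem Ktilde_pow_mul_pow (μ : Measure X) (Λ : X → ℝ → ℝ) (α : ℝ) (x : X) {r : ℝ}
    (hr : 0 < r) {a b : ℕ} (hab : a < b) :
    Ktilde μ Λ α x (6 ^ a * r) (6 ^ b * r) = 1 + ∑ j ∈ Finset.Ioc a b, KtildeTerm μ Λ α x r j := by
  rw [Ktilde_eq_sum, NBS_pow_mul_pow hr hab, sum_Ioc_KtildeTerm_pow_mul,
    Nat.add_sub_cancel' hab.le]

theorem UpperDoubling.KtildeTerm_nonneg (hUD : UpperDoubling μ Λ Cl) (α : ℝ) (x : X) {r : ℝ}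
    (hr : 0 < r) (k : ℕ) : 0 ≤ KtildeTerm μ Λ α x r k :=
  Real.rpow_nonneg (div_nonneg toReal_nonneg (hUD.pos x _ (by positivity)).le) _

theorem UpperDoubling.one_le_Ktilde (hUD : UpperDoubling μ Λ Cl) (α : ℝ) (x : X) {rB : ℝ}
    (hrB : 0 < rB) (rS : ℝ) : 1 ≤ Ktilde μ Λ α x rB rS := by
  rw [Ktilde_eq_sum]
  linarith [sum_nonneg fun k (_ : k ∈ Finset.Ioc 0 (NBS rB rS)) => hUD.KtildeTerm_nonneg α x hrB k]

theorem UpperDoubling.KtildeTerm_le_one (hUD : UpperDoubling μ Λ Cl) (hα : α ≤ 1) (x : X)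
    {r : ℝ} (hr : 0 < r) (k : ℕ) : KtildeTerm μ Λ α x r k ≤ 1 := by
  have hpos := hUD.pos x (6 ^ k * r) (by positivity)
  exact Real.rpow_le_one (div_nonneg toReal_nonneg hpos.le)
    ((div_le_one hpos).mpr (hUD.measure_ball_toReal_le x (by positivity))) (by linarith)

theorem UpperDoubling.div_nonneg_of_pow_three_lt (hUD : UpperDoubling μ Λ Cl)
    (hβ : Cl ^ 3 < β) : 0 ≤ Cl ^ 3 / β :=
  div_nonneg (pow_nonneg hUD.const_nonneg 3) (hUD.pos_of_pow_three_lt hβ).le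

theorem UpperDoubling.div_rpow_lt_one (hUD : UpperDoubling μ Λ Cl) (hβ : Cl ^ 3 < β)
    (hα : α < 1) : (Cl ^ 3 / β) ^ (1 - α) < 1 :=
  Real.rpow_lt_one (hUD.div_nonneg_of_pow_three_lt hβ)
    ((div_lt_one (hUD.pos_of_pow_three_lt hβ)).mpr hβ) (by linarith)

theorem UpperDoubling.one_le_tailConst (hUD : UpperDoubling μ Λ Cl) (hβ : Cl ^ 3 < β)
    (hα : α < 1) : 1 ≤ tailConst Cl β α :=
  one_le_inv₀ (by linarith [hUD.div_rpow_lt_one hβ hα]) |>.mpr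
    (by linarith [Real.rpow_nonneg (hUD.div_nonneg_of_pow_three_lt hβ) (1 - α)])

theorem UpperDoubling.three_add_tailConst_le (hUD : UpperDoubling μ Λ Cl) (hβ : Cl ^ 3 < β)
    (hα : α < 1) : 3 + tailConst Cl β α ≤ 3 + Cl ^ 7 * tailConst Cl β α := by
  have := hUD.one_le_tailConst hβ hα
  have : 1 ≤ Cl ^ 7 := one_le_pow₀ hUD.one_le
  nlinarith

theorem UpperDoubling.KtildeTerm_le_of_le_doublingIndex (hUD : UpperDoubling μ Λ Cl)
    (hβ : Cl ^ 3 < β) (hα : α ≤ 1) (c : X) {r : ℝ} (hr : 0 < r) {k : ℕ}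
    (hk : k ≤ doublingIndex μ β c r) :
    KtildeTerm μ Λ α c r k ≤ ((Cl ^ 3 / β) ^ (1 - α)) ^ (doublingIndex μ β c r - k) := by
  rw [Real.rpow_pow_comm (hUD.div_nonneg_of_pow_three_lt hβ)]
  exact Real.rpow_le_rpow (div_nonneg toReal_nonneg (hUD.pos c _ (by positivity)).le)
    (hUD.measure_div_le_of_le_doublingIndex hβ c hr hk) (by linarith)

theorem UpperDoubling.sum_KtildeTerm_Ioc_doublingIndex_le (hUD : UpperDoubling μ Λ Cl)
    (hβ : Cl ^ 3 < β) (hα : α < 1) (c : X) {r : ℝ} (hr : 0 < r) (m : ℕ) :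
    ∑ j ∈ Finset.Ioc m (m + doublingIndex μ β c (6 ^ m * r)), KtildeTerm μ Λ α c r j ≤
      tailConst Cl β α := by
  rw [← sum_Ioc_KtildeTerm_pow_mul]
  simpa [tailConst] using sum_Ioc_le_mul_inv_one_sub zero_le_one
    (Real.rpow_nonneg (hUD.div_nonneg_of_pow_three_lt hβ) (1 - α)) (hUD.div_rpow_lt_one hβ hα)
    fun k hk => by
      simpa using hUD.KtildeTerm_le_of_le_doublingIndex hβ hα.le c (by positivity)
        (Finset.mem_Ioc.1 hk).2

theorem UpperDoubling.KtildeTerm_le_of_dist_lt (hUD : UpperDoubling μ Λ Cl) (hβ : Cl ^ 3 < β)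
    (hα₀ : 0 ≤ α) (hα₁ : α ≤ 1) {cB cS : X} {s rS : ℝ} (hs : 0 < s) (hsrS : s < rS)
    (hrS : rS ≤ 6 * s) (hd : dist cB cS < rS) {k : ℕ} (hk₁ : 1 ≤ k)
    (hk : k ≤ doublingIndex μ β cB (6 ^ 2 * s)) :
    KtildeTerm μ Λ α cS rS k ≤
      Cl ^ 7 * ((Cl ^ 3 / β) ^ (1 - α)) ^ (doublingIndex μ β cB (6 ^ 2 * s) - k) := by
  have hCl : 1 ≤ Cl := hUD.one_le
  have hCl₀ : 0 ≤ Cl := zero_le_one.trans hCl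
  have hβ₀ : 0 < β := hUD.pos_of_pow_three_lt hβ
  have hrS₀ : 0 < rS := hs.trans hsrS
  have h6k : 6 * s ≤ 6 ^ k * s := by gcongr; exact le_self_pow₀ (by norm_num) (by omega)
  have hsub : ball cS (6 ^ k * rS) ⊆ ball cB (6 ^ k * (6 ^ 2 * s)) := by
    refine ball_subset_ball' ?_
    have : 6 ^ k * rS ≤ 6 ^ k * (6 * s) := by gcongr
    rw [dist_comm]
    nlinarith
  have hΛ : Λ cB (6 ^ k * (6 ^ 2 * s)) ≤ Cl ^ 7 * Λ cS (6 ^ k * rS) :=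
    calc Λ cB (6 ^ k * (6 ^ 2 * s)) = Λ cB (6 ^ 2 * (6 ^ k * s)) := by ring_nf
      _ ≤ (Cl ^ 3) ^ 2 * Λ cB (6 ^ k * s) := hUD.apply_pow_mul_le cB (by positivity) 2
      _ ≤ (Cl ^ 3) ^ 2 * (Cl * Λ cS (6 ^ k * s)) := by
          gcongr; exact hUD.compat cB cS _ (by positivity) (by linarith)
      _ ≤ (Cl ^ 3) ^ 2 * (Cl * Λ cS (6 ^ k * rS)) := by
          gcongr
          exact hUD.mono cS (by positivity : (0 : ℝ) < 6 ^ k * s)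
            (by positivity : (0 : ℝ) < 6 ^ k * rS) (by gcongr)
      _ = Cl ^ 7 * Λ cS (6 ^ k * rS) := by ring
  have hratio := (hUD.measure_div_le_mul_of_subset (by positivity) (by positivity) hsub hΛ).trans
    (mul_le_mul_of_nonneg_left
      (hUD.measure_div_le_of_le_doublingIndex hβ cB (by positivity) hk) (by positivity))
  calc KtildeTerm μ Λ α cS rS k
      ≤ (Cl ^ 7 * (Cl ^ 3 / β) ^ (doublingIndex μ β cB (6 ^ 2 * s) - k)) ^ (1 - α) :=
        Real.rpow_le_rpow (div_nonneg toReal_nonneg (hUD.pos cS _ (by positivity)).le) hratio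
          (by linarith)
    _ = (Cl ^ 7) ^ (1 - α) * ((Cl ^ 3 / β) ^ (1 - α)) ^ (doublingIndex μ β cB (6 ^ 2 * s) - k) := by
        rw [Real.mul_rpow (by positivity) (by positivity), Real.rpow_pow_comm (by positivity)]
    _ ≤ Cl ^ 7 * ((Cl ^ 3 / β) ^ (1 - α)) ^ (doublingIndex μ β cB (6 ^ 2 * s) - k) := by
        gcongr
        exact Real.rpow_le_self_of_one_le (one_le_pow₀ hUD.one_le) (by linarith)

theorem UpperDoubling.Ktilde_le_of_dist_lt (hUD : UpperDoubling μ Λ Cl) (hβ : Cl ^ 3 < β)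
    (hα₀ : 0 ≤ α) (hα₁ : α < 1) {cB cS : X} {s rS : ℝ} (hs : 0 < s) (hsrS : s < rS)
    (hrS : rS ≤ 6 * s) (hd : dist cB cS < rS) :
    Ktilde μ Λ α cS rS (6 ^ doublingIndex μ β cB (6 ^ 2 * s) * (6 ^ 2 * s)) ≤
      3 + Cl ^ 7 * tailConst Cl β α := by
  set t := doublingIndex μ β cB (6 ^ 2 * s)
  have hrS₀ : 0 < rS := hs.trans hsrS
  have hT := hUD.KtildeTerm_nonneg α cS hrS₀
  have hN : NBS rS (6 ^ t * (6 ^ 2 * s)) ≤ t + 2 := by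
    refine NBS_le (by omega) ?_
    rw [pow_add, mul_assoc]
    gcongr
  have hsum : ∑ k ∈ Finset.Ioc 0 t, KtildeTerm μ Λ α cS rS k ≤ Cl ^ 7 * tailConst Cl β α :=
    sum_Ioc_le_mul_inv_one_sub (pow_nonneg hUD.const_nonneg 7)
      (Real.rpow_nonneg (hUD.div_nonneg_of_pow_three_lt hβ) (1 - α))
      (hUD.div_rpow_lt_one hβ hα₁) fun k hk =>
        hUD.KtildeTerm_le_of_dist_lt hβ hα₀ hα₁.le hs hsrS hrS hd (Finset.mem_Ioc.1 hk).1
          (Finset.mem_Ioc.1 hk).2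
  rw [Ktilde_eq_sum]
  calc 1 + ∑ k ∈ Finset.Ioc 0 (NBS rS (6 ^ t * (6 ^ 2 * s))), KtildeTerm μ Λ α cS rS k
      ≤ 1 + ∑ k ∈ Finset.Ioc 0 (t + 2), KtildeTerm μ Λ α cS rS k := by
        grw [sum_le_sum_of_subset_of_nonneg (Finset.Ioc_subset_Ioc_right hN) fun k _ _ => hT k]
    _ = 1 + (∑ k ∈ Finset.Ioc 0 t, KtildeTerm μ Λ α cS rS k + KtildeTerm μ Λ α cS rS (t + 1) +
          KtildeTerm μ Λ α cS rS (t + 2)) := by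
        rw [sum_Ioc_succ_top (by omega : 0 ≤ t + 1), sum_Ioc_succ_top (Nat.zero_le t)]
    _ ≤ 3 + Cl ^ 7 * tailConst Cl β α := by
        linarith [hUD.KtildeTerm_le_one hα₁.le cS hrS₀ (t + 1),
          hUD.KtildeTerm_le_one hα₁.le cS hrS₀ (t + 2)]

theorem UpperDoubling.Ktilde_le_of_one_lt_NBS (hUD : UpperDoubling μ Λ Cl) (hβ : Cl ^ 3 < β)
    (hα₀ : 0 ≤ α) (hα₁ : α < 1) {cB cS : X} {rB rS : ℝ} (hrB : 0 < rB)
    (hBS : ball cB rB ⊆ ball cS rS) (hN : 1 < NBS rB rS) :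
    Ktilde μ Λ α cS rS
        (6 ^ (NBS rB rS + 1 + doublingIndex μ β cB (6 ^ (NBS rB rS + 1) * rB)) * rB) ≤
      3 + Cl ^ 7 * tailConst Cl β α := by
  set N := NBS rB rS
  have hs : 6 ^ 2 * (6 ^ (N - 1) * rB) = 6 ^ (N + 1) * rB := by
    rw [← mul_assoc, ← pow_add]; congr 2; omega
  have hrS : rS ≤ 6 * (6 ^ (N - 1) * rB) := by
    rw [← mul_assoc, ← pow_succ', Nat.sub_add_cancel hN.le]; exact (NBS_spec hrB rS).2
  have hK := hUD.Ktilde_le_of_dist_lt hβ hα₀ hα₁ (by positivity)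
    (pow_mul_lt_of_lt_NBS (by omega) (by omega)) hrS (mem_ball.1 (hBS (mem_ball_self hrB)))
  rwa [hs, ← mul_assoc, ← pow_add, add_comm _ (N + 1)] at hK

def KtildeCondition (μ : Measure X) (Λ : X → ℝ → ℝ) (β α : ℝ) (x : X) (P Cx : ℝ)
    (F : X → ℝ → ℝ) : Prop :=
  ∀ (cB : X) (rB : ℝ) (cS : X) (rS : ℝ), 0 < rB → 0 < rS →
    x ∈ ball cB rB → ball cB rB ⊆ ball cS rS →
    IsDoublingBall μ β cB rB → IsDoublingBall μ β cS rS →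
    Ktilde μ Λ α cB rB rS ≤ P → |F cB rB - F cS rS| ≤ Ktilde μ Λ α cB rB rS * Cx

variable {x : X} {P Cx : ℝ} {F : X → ℝ → ℝ}

theorem KtildeCondition.abs_sub_pow_mul_le (hF : KtildeCondition μ Λ β α x P Cx F)
    (hUD : UpperDoubling μ Λ Cl) (hβ : Cl ^ 3 < β) (hα : α < 1)
    (hP : 3 + tailConst Cl β α ≤ P) (hCx : 0 ≤ Cx) {c : X} {r : ℝ} (hr : 0 < r)
    (hx : x ∈ ball c r) {a b : ℕ} (hab : a < b) (ha : IsDoublingBall μ β c (6 ^ a * r))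
    (hb : IsDoublingBall μ β c (6 ^ b * r)) :
    |F c (6 ^ a * r) - F c (6 ^ b * r)| ≤
      P * (1 + ∑ j ∈ Finset.Ioc a b, KtildeTerm μ Λ α c r j) * Cx := by
  refine abs_sub_le_of_chain (f := fun j => F c (6 ^ j * r))
    (good := fun j => IsDoublingBall μ β c (6 ^ j * r)) (hUD.KtildeTerm_nonneg α c hr)
    (hUD.KtildeTerm_le_one hα.le c hr) hP hCx (fun m => ?_) (fun a b hab ha hb hK => ?_) hab ha hb
  · exact ⟨_, le_self_add, hUD.isDoublingBall_pow_add_doublingIndex hβ c hr m,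
      hUD.sum_KtildeTerm_Ioc_doublingIndex_le hβ hα c hr m⟩
  · rw [← Ktilde_pow_mul_pow μ Λ α c hr hab] at hK
    have hxa : x ∈ ball c (6 ^ a * r) :=
      ball_subset_ball (le_mul_of_one_le_left hr.le (one_le_pow₀ (by norm_num))) hx
    have hab' : ball c (6 ^ a * r) ⊆ ball c (6 ^ b * r) :=
      ball_subset_ball (mul_le_mul_of_nonneg_right (pow_le_pow_right₀ (by norm_num) hab.le) hr.le)
    exact (hF c _ c _ (by positivity) (by positivity) hxa hab' ha hb hK).trans (by gcongr)

theorem KtildeCondition.abs_sub_le_of_one_lt_NBS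
    (hF : KtildeCondition μ Λ β α x (3 + Cl ^ 7 * tailConst Cl β α) Cx F)
    (hUD : UpperDoubling μ Λ Cl) (hβ : Cl ^ 3 < β) (hα₀ : 0 ≤ α) (hα₁ : α < 1) (hCx : 0 ≤ Cx)
    {cB : X} {rB : ℝ} {cS : X} {rS : ℝ} (hrB : 0 < rB) (hrS : 0 < rS) (hxB : x ∈ ball cB rB)
    (hBS : ball cB rB ⊆ ball cS rS) (hdB : IsDoublingBall μ β cB rB)
    (hdS : IsDoublingBall μ β cS rS) (hN : 1 < NBS rB rS) :
    |F cB rB - F cS rS| ≤ (3 + Cl ^ 7 * tailConst Cl β α) * (3 + tailConst Cl β α) *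
      Ktilde μ Λ α cB rB rS * Cx := by
  set c₀ := tailConst Cl β α
  set P := 3 + Cl ^ 7 * c₀
  set N := NBS rB rS
  set T := KtildeTerm μ Λ α cB rB
  set t := doublingIndex μ β cB (6 ^ (N + 1) * rB)
  have hc₀ : 1 ≤ c₀ := hUD.one_le_tailConst hβ hα₁
  have hP : 3 + c₀ ≤ P := hUD.three_add_tailConst_le hβ hα₁
  have hP₀ : 0 ≤ P := by linarith
  -- `Q = 6^(N+1+t) B` is the first doubling ball `6^j B` with `j > N`.
  have hdQ : IsDoublingBall μ β cB (6 ^ (N + 1 + t) * rB) :=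
    hUD.isDoublingBall_pow_add_doublingIndex hβ cB hrB (N + 1)
  have hSQ : ball cS rS ⊆ ball cB (6 ^ (N + 1 + t) * rB) := by
    refine (ball_subset_ball_two_mul hrB hBS).trans (ball_subset_ball ?_)
    calc 2 * rS ≤ 6 * (6 ^ N * rB) := by linarith [(NBS_spec hrB rS).2]
      _ = 6 ^ (N + 1) * rB := by ring
      _ ≤ 6 ^ (N + 1 + t) * rB :=
          mul_le_mul_of_nonneg_right (pow_le_pow_right₀ (by norm_num) (Nat.le_add_right _ _))
            hrB.le
  have hleg₁ : |F cB rB - F cB (6 ^ (N + 1 + t) * rB)| ≤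
      P * (1 + (∑ j ∈ Finset.Ioc 0 N, T j + 1 + c₀)) * Cx := by
    have hsum : ∑ j ∈ Finset.Ioc 0 (N + 1 + t), T j ≤ ∑ j ∈ Finset.Ioc 0 N, T j + 1 + c₀ := by
      rw [← sum_Ioc_consecutive _ (Nat.zero_le _) (Nat.le_add_right (N + 1) t),
        sum_Ioc_succ_top (Nat.zero_le N)]
      linarith [hUD.KtildeTerm_le_one hα₁.le cB hrB (N + 1),
        hUD.sum_KtildeTerm_Ioc_doublingIndex_le hβ hα₁ cB hrB (N + 1)]
    have := hF.abs_sub_pow_mul_le hUD hβ hα₁ hP hCx hrB hxB (a := 0) (by omega)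
      (by simpa using hdB) hdQ
    rw [pow_zero, one_mul] at this
    exact this.trans (mul_le_mul_of_nonneg_right (mul_le_mul_of_nonneg_left (by linarith) hP₀) hCx)
  have hleg₂ : |F cS rS - F cB (6 ^ (N + 1 + t) * rB)| ≤ P * Cx := by
    have hK := hUD.Ktilde_le_of_one_lt_NBS hβ hα₀ hα₁ hrB hBS hN
    exact (hF cS rS cB _ hrS (by positivity) (hBS hxB) hSQ hdS hdQ hK).trans (by gcongr)
  have hS₀ : 0 ≤ ∑ j ∈ Finset.Ioc 0 N, T j := sum_nonneg fun j _ => hUD.KtildeTerm_nonneg α cB hrB j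
  rw [Ktilde_eq_sum]
  calc |F cB rB - F cS rS|
      ≤ |F cB rB - F cB (6 ^ (N + 1 + t) * rB)| + |F cS rS - F cB (6 ^ (N + 1 + t) * rB)| := by
        rw [abs_sub_comm (F cS rS)]; exact abs_sub_le _ _ _
    _ ≤ P * (1 + (∑ j ∈ Finset.Ioc 0 N, T j + 1 + c₀)) * Cx + P * Cx := add_le_add hleg₁ hleg₂
    _ ≤ P * (3 + c₀) * (1 + ∑ j ∈ Finset.Ioc 0 N, T j) * Cx := by
        nlinarith [mul_nonneg (mul_nonneg hP₀ hS₀) hCx]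

theorem KtildeCondition.abs_sub_le
    (hF : KtildeCondition μ Λ β α x (3 + Cl ^ 7 * tailConst Cl β α) Cx F)
    (hUD : UpperDoubling μ Λ Cl) (hβ : Cl ^ 3 < β) (hα₀ : 0 ≤ α) (hα₁ : α < 1) (hCx : 0 ≤ Cx)
    {cB : X} {rB : ℝ} {cS : X} {rS : ℝ} (hrB : 0 < rB) (hrS : 0 < rS) (hxB : x ∈ ball cB rB)
    (hBS : ball cB rB ⊆ ball cS rS) (hdB : IsDoublingBall μ β cB rB)
    (hdS : IsDoublingBall μ β cS rS) :
    |F cB rB - F cS rS| ≤ (3 + Cl ^ 7 * tailConst Cl β α) * (3 + tailConst Cl β α) *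
      Ktilde μ Λ α cB rB rS * Cx := by
  rcases (NBS_spec hrB rS).1.eq_or_lt with hN | hN
  · have hP := hUD.three_add_tailConst_le hβ hα₁
    have hc₀ := hUD.one_le_tailConst hβ hα₁
    have hK : Ktilde μ Λ α cB rB rS ≤ 2 := by
      rw [Ktilde_eq_sum, ← hN, show Finset.Ioc 0 1 = {1} by decide, sum_singleton]
      linarith [hUD.KtildeTerm_le_one hα₁.le cB hrB 1]
    have hK₀ : 0 ≤ Ktilde μ Λ α cB rB rS * Cx :=
      mul_nonneg (zero_le_one.trans (hUD.one_le_Ktilde α cB hrB rS)) hCx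
    calc |F cB rB - F cS rS| ≤ Ktilde μ Λ α cB rB rS * Cx :=
          hF cB rB cS rS hrB hrS hxB hBS hdB hdS (by linarith)
      _ ≤ _ := by
        rw [mul_assoc _ (Ktilde μ Λ α cB rB rS)]
        exact le_mul_of_one_le_left hK₀ (by nlinarith)
  · exact hF.abs_sub_le_of_one_lt_NBS hUD hβ hα₀ hα₁ hCx hrB hrS hxB hBS hdB hdS hN

end NonHomogeneousSpace

end NonHomog

theorem statement9_general {X : Type*} [MetricSpace X] [MeasurableSpace X]
    (μ : MeasureTheory.Measure X) (Λ : X → ℝ → ℝ) (Cl : ℝ) (N₀ : ℕ)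
    (hUD : NonHomog.UpperDoubling μ Λ Cl)
    (α : ℝ) (hα : α ∈ Set.Ico (0 : ℝ) 1) :
    ∃ P : ℝ, 0 < P ∧ ∃ C₄ : ℝ, 0 < C₄ ∧
      ∀ (x : X) (Cx : ℝ), 0 < Cx → ∀ F : X → ℝ → ℝ,
        (∀ (cB : X) (rB : ℝ) (cS : X) (rS : ℝ), 0 < rB → 0 < rS →
          x ∈ Metric.ball cB rB → Metric.ball cB rB ⊆ Metric.ball cS rS →
          NonHomog.IsDoublingBall μ (NonHomog.beta6 N₀ Cl) cB rB →
          NonHomog.IsDoublingBall μ (NonHomog.beta6 N₀ Cl) cS rS →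
          NonHomog.Ktilde μ Λ α cB rB rS ≤ P →
          |F cB rB - F cS rS| ≤ NonHomog.Ktilde μ Λ α cB rB rS * Cx) →
        ∀ (cB : X) (rB : ℝ) (cS : X) (rS : ℝ), 0 < rB → 0 < rS →
          x ∈ Metric.ball cB rB → Metric.ball cB rB ⊆ Metric.ball cS rS →
          NonHomog.IsDoublingBall μ (NonHomog.beta6 N₀ Cl) cB rB →
          NonHomog.IsDoublingBall μ (NonHomog.beta6 N₀ Cl) cS rS →
          |F cB rB - F cS rS| ≤ C₄ * NonHomog.Ktilde μ Λ α cB rB rS * Cx := by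
  obtain ⟨hα₀, hα₁⟩ := hα
  have hβ := NonHomog.pow_three_lt_beta6 N₀ Cl
  have hc₀ := hUD.one_le_tailConst hβ hα₁
  have hP := hUD.three_add_tailConst_le hβ hα₁
  refine ⟨_, by linarith, _, by nlinarith, fun x Cx hCx F hF cB rB cS rS hrB hrS hxB hBS hdB hdS =>
    NonHomog.KtildeCondition.abs_sub_le hF hUD hβ hα₀ hα₁ hCx.le hrB hrS hxB hBS hdB hdS⟩

/-- Lemma 3.8: a regularity condition for a family of numbers attached to the balls
containing a fixed point `x`, stated for doubling balls, self-improves from pairs with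
`K̃^{(α)}_{B,S} ≤ P̃_α` to all pairs of doubling balls. -/
theorem statement9 {X : Type*} [MetricSpace X] [MeasurableSpace X] [BorelSpace X]
    (μ : MeasureTheory.Measure X) (Λ : X → ℝ → ℝ) (Cl : ℝ) (N₀ : ℕ)
    (hGD : NonHomog.GeomDoublingWith X N₀) (hUD : NonHomog.UpperDoubling μ Λ Cl)
    (α : ℝ) (hα : α ∈ Set.Ico (0 : ℝ) 1) :
    ∃ P : ℝ, 0 < P ∧ ∃ C₄ : ℝ, 0 < C₄ ∧
      ∀ (x : X) (Cx : ℝ), 0 < Cx → ∀ F : X → ℝ → ℝ,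
        (∀ (cB : X) (rB : ℝ) (cS : X) (rS : ℝ), 0 < rB → 0 < rS →
          x ∈ Metric.ball cB rB → Metric.ball cB rB ⊆ Metric.ball cS rS →
          NonHomog.IsDoublingBall μ (NonHomog.beta6 N₀ Cl) cB rB →
          NonHomog.IsDoublingBall μ (NonHomog.beta6 N₀ Cl) cS rS →
          NonHomog.Ktilde μ Λ α cB rB rS ≤ P →
          |F cB rB - F cS rS| ≤ NonHomog.Ktilde μ Λ α cB rB rS * Cx) →
        ∀ (cB : X) (rB : ℝ) (cS : X) (rS : ℝ), 0 < rB → 0 < rS →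
          x ∈ Metric.ball cB rB → Metric.ball cB rB ⊆ Metric.ball cS rS →
          NonHomog.IsDoublingBall μ (NonHomog.beta6 N₀ Cl) cB rB →
          NonHomog.IsDoublingBall μ (NonHomog.beta6 N₀ Cl) cS rS →
          |F cB rB - F cS rS| ≤ C₄ * NonHomog.Ktilde μ Λ α cB rB rS * Cx :=
  statement9_general μ Λ Cl N₀ hUD α hα
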